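/- arXiv:2106.03811 — 3 statements merged into one kernel-verified Lean document; each statement's English description precedes it below -/
import Mathlib

section
/- Fix real numbers N, n with N ≥ n > 0, a number of strata s, and vectors φ, τ ∈ ℝ^s with all entries strictly positive. Let φ̄ = Σ_{j=1}^s φ_j τ_j and suppose the implicit equation N·τ_i·φ̄ − φ̄ − (N−n)·τ_i·φ_i = 0 holds for every i = 1,…,s. Then τ_i ≥ 1/N for every i; equivalently, every entry of the vector a = N·τ − 1 is nonnegative. -/
/-! Writing `φ̄ = ∑ j, φ j * τ j`, the implicit equation for stratum `i` rearranges to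
`φ̄ * (N * τ i - 1) = (N - n) * τ i * φ i`. The right-hand side is nonnegative because
`N ≥ n`, and `φ̄ > 0`, so `N * τ i - 1 ≥ 0`. -/

theorem mul_sub_one_nonneg_of_implicit_eq {ι : Type*} [Fintype ι] (N n : ℝ) (φ τ : ι → ℝ)
    (hNn : n ≤ N) (hφ : ∀ i, 0 < φ i) (hτ : ∀ i, 0 < τ i) (i : ι)
    (himpl : N * τ i * (∑ j, φ j * τ j) - (∑ j, φ j * τ j) - (N - n) * τ i * φ i = 0) :
    0 ≤ N * τ i - 1 := by
  have hbar : 0 < ∑ j, φ j * τ j :=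
    Finset.sum_pos (fun j _ => mul_pos (hφ j) (hτ j)) ⟨i, Finset.mem_univ i⟩
  have hrhs : 0 ≤ (N - n) * τ i * φ i :=
    mul_nonneg (mul_nonneg (sub_nonneg.mpr hNn) (hτ i).le) (hφ i).le
  have hkey : (∑ j, φ j * τ j) * (N * τ i - 1) = (N - n) * τ i * φ i := by
    linear_combination himpl
  exact nonneg_of_mul_nonneg_right (hkey ▸ hrhs) hbar

/-- Part of Lemma (diti): under the implicit equation (Inplicit),
`τ_i ≥ 1/N`, i.e. every entry of `a = N·τ − 1` is nonnegative. -/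
theorem a_entries_nonneg
    (N n : ℝ) (s : ℕ) (φ τ : Fin s → ℝ)
    (hNn : n ≤ N) (hn : 0 < n)
    (hφ : ∀ i, 0 < φ i) (hτ : ∀ i, 0 < τ i)
    (himpl : ∀ i, N * τ i * (∑ j, φ j * τ j) - (∑ j, φ j * τ j)
      - (N - n) * τ i * φ i = 0) :
    ∀ i, 1 / N ≤ τ i ∧ 0 ≤ N * τ i - 1 := by
  intro i
  have hN : 0 < N := hn.trans_le hNn
  have ha : 0 ≤ N * τ i - 1 := mul_sub_one_nonneg_of_implicit_eq N n φ τ hNn hφ hτ i (himpl i)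
  refine ⟨?_, ha⟩
  rw [div_le_iff₀ hN]
  linarith
end

section
/- Fix real numbers N > n > 0 and s ≥ 1, and define F : ℝ^s × ℝ^s → ℝ^s by F(φ,τ)_i = N·τ_i·(Σ_j φ_j τ_j) − (Σ_j φ_j τ_j) − (N−n)·τ_i·φ_i. Suppose (φ₀, τ₀) has all entries strictly positive and F(φ₀, τ₀) = 0. Then there exist a neighborhood U of φ₀ in ℝ^s and a continuously differentiable map g : U → ℝ^s such that g(φ₀) = τ₀ and F(φ, g(φ)) = 0 for all φ ∈ U; moreover g is locally unique, i.e. there is a neighborhood W of (φ₀, τ₀) such that any (φ,τ) ∈ W with F(φ,τ) = 0 satisfies τ = g(φ). -/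
/-!
The partial derivative of `F` in `τ` at `(φ₀, τ₀)` is
`v ↦ ((N S₀ - (N - n) φ₀ᵢ) vᵢ + (N τ₀ᵢ - 1) T)ᵢ` with `S₀ = ∑ φ₀ⱼ τ₀ⱼ` and `T = ∑ φ₀ⱼ vⱼ`.
If it kills `v`, the equation `F (φ₀, τ₀) = 0` turns the `i`-th coordinate into
`S₀ vᵢ = τ₀ᵢ (1 - N τ₀ᵢ) T`; pairing with `φ₀` gives `N (∑ φ₀ⱼ τ₀ⱼ²) T = 0`, so `T = 0` and then
`v = 0`. An injective endomorphism of `ℝ^s` is invertible, so the `C¹` implicit function theorem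
applies to the polynomial map `F`.
-/

open Topology

theorem ContDiffAt.exists_isOpen_contDiffOn_implicitFunction {𝕜 : Type*} [RCLike 𝕜]
    {E₁ E₂ F : Type*} [NormedAddCommGroup E₁] [NormedSpace 𝕜 E₁] [CompleteSpace E₁]
    [NormedAddCommGroup E₂] [NormedSpace 𝕜 E₂] [CompleteSpace E₂]
    [NormedAddCommGroup F] [NormedSpace 𝕜 F] [CompleteSpace F]
    {f : E₁ × E₂ → F} {u : E₁ × E₂} {n : ℕ} (hf : ContDiffAt 𝕜 n f u) (hn : n ≠ 0)
    (hf₂ : (fderiv 𝕜 f u ∘L .inr 𝕜 E₁ E₂).IsInvertible) :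
    ∃ (U : Set E₁) (g : E₁ → E₂), IsOpen U ∧ u.1 ∈ U ∧ ContDiffOn 𝕜 n g U ∧ g u.1 = u.2 ∧
      (∀ x ∈ U, f (x, g x) = f u) ∧ ∃ W ∈ 𝓝 u, ∀ p ∈ W, f p = f u → p.2 = g p.1 := by
  have hn' : (n : WithTop ℕ∞) ≠ 0 := by exact_mod_cast hn
  obtain ⟨U, hU, hUo, hmem⟩ := eventually_nhds_iff.1
    (((hf.contDiffAt_implicitFunction hn' hf₂).eventually (by simp)).and
      (hf.eventually_apply_implicitFunction hn' hf₂))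
  exact ⟨U, hf.implicitFunction hn' hf₂, hUo, hmem, fun x hx => (hU x hx).1.contDiffWithinAt,
    hf.implicitFunction_apply_self hn' hf₂, fun x hx => (hU x hx).2, _,
    hf.eventually_apply_eq_iff_implicitFunction hn' hf₂, fun _ hp h => (hp.1 h).symm⟩

theorem ContinuousLinearMap.isInvertible_of_injective {𝕜 E : Type*} [NontriviallyNormedField 𝕜]
    [CompleteSpace 𝕜] [NormedAddCommGroup E] [NormedSpace 𝕜 E] [FiniteDimensional 𝕜 E]
    {f : E →L[𝕜] E} (hf : Function.Injective f) : f.IsInvertible :=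
  ⟨(LinearEquiv.ofInjectiveEndo f.toLinearMap hf).toContinuousLinearEquiv, rfl⟩

section LikelihoodMap

variable {ι : Type*} [Fintype ι]

def likelihoodMap (N n : ℝ) (p : (ι → ℝ) × (ι → ℝ)) : ι → ℝ := fun i =>
  N * p.2 i * (∑ j, p.1 j * p.2 j) - (∑ j, p.1 j * p.2 j) - (N - n) * p.2 i * p.1 i

theorem contDiff_likelihoodMap (N n : ℝ) {m : WithTop ℕ∞} :
    ContDiff ℝ m (likelihoodMap (ι := ι) N n) := by
  unfold likelihoodMap
  fun_prop

def likelihoodMapDerivRight (N n : ℝ) (φ τ : ι → ℝ) : (ι → ℝ) →L[ℝ] (ι → ℝ) :=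
  .pi fun i => (N * ∑ j, φ j * τ j - (N - n) * φ i) • .proj i +
    (N * τ i - 1) • ∑ j, φ j • .proj j

@[simp]
theorem likelihoodMapDerivRight_apply (N n : ℝ) (φ τ v : ι → ℝ) (i : ι) :
    likelihoodMapDerivRight N n φ τ v i =
      (N * ∑ j, φ j * τ j - (N - n) * φ i) * v i + (N * τ i - 1) * ∑ j, φ j * v j := by
  simp [likelihoodMapDerivRight]

theorem hasFDerivAt_likelihoodMap_right (N n : ℝ) (φ τ : ι → ℝ) :
    HasFDerivAt (fun τ => likelihoodMap N n (φ, τ)) (likelihoodMapDerivRight N n φ τ) τ := by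
  refine hasFDerivAt_pi.2 fun i => ?_
  have hS : HasFDerivAt (fun τ : ι → ℝ => ∑ j, φ j * τ j)
      (∑ j, φ j • ContinuousLinearMap.proj (R := ℝ) (φ := fun _ : ι => ℝ) j) τ :=
    HasFDerivAt.fun_sum fun j _ => (hasFDerivAt_apply j τ).const_mul (φ j)
  have hτi : HasFDerivAt (fun τ : ι → ℝ => τ i) (ContinuousLinearMap.proj (R := ℝ) i) τ :=
    hasFDerivAt_apply i τ
  have h := ((hτi.const_mul N).mul hS).sub hS |>.sub ((hτi.const_mul (N - n)).mul_const (φ i))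
  refine h.congr_fderiv ?_
  ext v
  simp only [sub_apply, add_apply, smul_apply, sum_apply, ContinuousLinearMap.proj_apply,
    smul_eq_mul]
  ring

theorem fderiv_likelihoodMap_comp_inr (N n : ℝ) (φ τ : ι → ℝ) :
    fderiv ℝ (likelihoodMap N n) (φ, τ) ∘L .inr ℝ _ _ = likelihoodMapDerivRight N n φ τ :=
  (((contDiff_likelihoodMap N n (m := 1)).differentiable one_ne_zero _).hasFDerivAt.comp τ
    (hasFDerivAt_prodMk_right φ τ)).unique (hasFDerivAt_likelihoodMap_right N n φ τ)

theorem likelihoodMapDerivRight_injective {N n : ℝ} (hN : N ≠ 0) {φ τ : ι → ℝ}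
    (hφ : ∀ i, 0 < φ i) (hτ : ∀ i, 0 < τ i) (hzero : likelihoodMap N n (φ, τ) = 0) :
    Function.Injective (likelihoodMapDerivRight N n φ τ) := by
  refine (injective_iff_map_eq_zero _).2 fun v hv => funext fun i => ?_
  have : Nonempty ι := ⟨i⟩
  set S := ∑ j, φ j * τ j with hS
  set Q := ∑ j, φ j * τ j * τ j with hQ
  set T := ∑ j, φ j * v j with hT
  have hS_pos : 0 < S := Finset.sum_pos (fun j _ => by have := hφ j; have := hτ j; positivity)
    Finset.univ_nonempty
  have hQ_pos : 0 < Q := Finset.sum_pos (fun j _ => by have := hφ j; have := hτ j; positivity)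
    Finset.univ_nonempty
  have hv_eq : ∀ k, S * v k = τ k * (1 - N * τ k) * T := by
    intro k
    have hzk := congrFun hzero k
    have hvk := congrFun hv k
    simp only [likelihoodMap, likelihoodMapDerivRight_apply, Pi.zero_apply] at hzk hvk
    linear_combination τ k * hvk - v k * hzk
  have hT_zero : T = 0 := by
    have h : S * T = (S - N * Q) * T := by
      calc S * T = ∑ k, φ k * (S * v k) := by
            rw [hT, Finset.mul_sum]; exact Finset.sum_congr rfl fun k _ => by ring
        _ = ∑ k, φ k * (τ k * (1 - N * τ k) * T) := by simp only [hv_eq]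
        _ = (S - N * Q) * T := by
            simp only [hS, hQ, sub_mul, Finset.sum_mul, Finset.mul_sum, ← Finset.sum_sub_distrib]
            exact Finset.sum_congr rfl fun k _ => by ring
    have : N * Q * T = 0 := by linear_combination h
    simpa [hN, hQ_pos.ne'] using this
  simpa [hT_zero, hS_pos.ne'] using hv_eq i

end LikelihoodMap

theorem tau_implicit_function_of_phi_general
    (N n : ℝ) (hn : 0 < n) (hNn : n < N) (s : ℕ)
    (F : (Fin s → ℝ) × (Fin s → ℝ) → (Fin s → ℝ))
    (hF : ∀ φ τ : Fin s → ℝ, ∀ i,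
      F (φ, τ) i = N * τ i * (∑ j, φ j * τ j) - (∑ j, φ j * τ j)
        - (N - n) * τ i * φ i)
    (φ₀ τ₀ : Fin s → ℝ)
    (hφ₀ : ∀ i, 0 < φ₀ i) (hτ₀ : ∀ i, 0 < τ₀ i)
    (hzero : F (φ₀, τ₀) = 0) :
    ∃ (U : Set (Fin s → ℝ)) (g : (Fin s → ℝ) → (Fin s → ℝ)),
      IsOpen U ∧ φ₀ ∈ U ∧ ContDiffOn ℝ 1 g U ∧ g φ₀ = τ₀ ∧
      (∀ φ ∈ U, F (φ, g φ) = 0) ∧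
      ∃ W ∈ nhds (φ₀, τ₀), ∀ p ∈ W, F p = 0 → p.2 = g p.1 := by
  obtain rfl : F = likelihoodMap N n := funext fun p => funext (hF p.1 p.2)
  have hf₂ : (fderiv ℝ (likelihoodMap N n) (φ₀, τ₀) ∘L .inr ℝ _ _).IsInvertible := by
    rw [fderiv_likelihoodMap_comp_inr]
    exact ContinuousLinearMap.isInvertible_of_injective
      (likelihoodMapDerivRight_injective (hn.trans hNn).ne' hφ₀ hτ₀ hzero)
  obtain ⟨U, g, hU, hφ₀U, hg, hgφ₀, hgU, W, hW, hWg⟩ :=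
    (contDiff_likelihoodMap N n).contDiffAt.exists_isOpen_contDiffOn_implicitFunction
      one_ne_zero hf₂
  rw [hzero] at hgU hWg
  exact ⟨U, g, hU, hφ₀U, by exact_mod_cast hg, hgφ₀, hgU, W, hW, hWg⟩

/-- Proposition 1 via the Implicit Function Theorem: near a strictly positive
solution `(φ₀, τ₀)` of the implicit likelihood equation `F(φ,τ) = 0`, the
weight vector `τ` is a locally unique, continuously differentiable function
of `φ`. -/
theorem tau_implicit_function_of_phi
    (N n : ℝ) (hn : 0 < n) (hNn : n < N) (s : ℕ) (hs : 1 ≤ s)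
    (F : (Fin s → ℝ) × (Fin s → ℝ) → (Fin s → ℝ))
    (hF : ∀ φ τ : Fin s → ℝ, ∀ i,
      F (φ, τ) i = N * τ i * (∑ j, φ j * τ j) - (∑ j, φ j * τ j)
        - (N - n) * τ i * φ i)
    (φ₀ τ₀ : Fin s → ℝ)
    (hφ₀ : ∀ i, 0 < φ₀ i) (hτ₀ : ∀ i, 0 < τ₀ i)
    (hzero : F (φ₀, τ₀) = 0) :
    ∃ (U : Set (Fin s → ℝ)) (g : (Fin s → ℝ) → (Fin s → ℝ)),
      IsOpen U ∧ φ₀ ∈ U ∧ ContDiffOn ℝ 1 g U ∧ g φ₀ = τ₀ ∧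
      (∀ φ ∈ U, F (φ, g φ) = 0) ∧
      ∃ W ∈ nhds (φ₀, τ₀), ∀ p ∈ W, F p = 0 → p.2 = g p.1 :=
  tau_implicit_function_of_phi_general N n hn hNn s F hF φ₀ τ₀ hφ₀ hτ₀ hzero
end

section
/- Let (Ω, μ) be a probability space, let u : Ω → ℝ^k be integrable with E[u] = c·1 for some real constant c, and let f : ℝ^m → ℝ^k be twice differentiable at β with Σ_{j=1}^k f_j(y) = 1 for all y in a neighborhood of β. Then for all h, j, E[⟨∂²f/∂β_h∂β_j (β), u⟩] = 0, where ∂²f/∂β_h∂β_j (β) ∈ ℝ^k is the vector of second partial derivatives of the coordinates of f. -/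
/-!
Differentiating the constraint `∑ₗ fₗ = 1` twice near `β` shows that every second partial
derivative of `f` has coordinates summing to zero. Its inner product with `u` therefore has
expectation `∑ₗ ∂²fₗ · E[uₗ] = c · ∑ₗ ∂²fₗ = 0`.
-/

open MeasureTheory Filter Topology

namespace ContinuousLinearMap

variable {𝕜 E F G : Type*} [NontriviallyNormedField 𝕜]
  [NormedAddCommGroup E] [NormedSpace 𝕜 E] [NormedAddCommGroup F] [NormedSpace 𝕜 F]
  [NormedAddCommGroup G] [NormedSpace 𝕜 G]

theorem comp_fderiv_eventually_eq_zero_of_eventually_const {L : F →L[𝕜] G} {f : E → F} {x : E}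
    {c : G}
    (hf : ∀ᶠ y in 𝓝 x, DifferentiableAt 𝕜 f y) (hconst : ∀ᶠ y in 𝓝 x, L (f y) = c) :
    ∀ᶠ y in 𝓝 x, L.comp (fderiv 𝕜 f y) = 0 := by
  filter_upwards [hf, hconst.eventually_nhds] with y hy hconst_y
  have hLf : L ∘ f =ᶠ[𝓝 y] fun _ => c := hconst_y
  rw [← (L.hasFDerivAt.comp y hy.hasFDerivAt).fderiv, hLf.fderiv_eq, fderiv_const_apply]

theorem apply_fderiv_fderiv_eq_zero_of_eventually_const {L : F →L[𝕜] G} {f : E → F} {x : E}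
    {c : G}
    (hf : ∀ᶠ y in 𝓝 x, DifferentiableAt 𝕜 f y) (hf2 : DifferentiableAt 𝕜 (fderiv 𝕜 f) x)
    (hconst : ∀ᶠ y in 𝓝 x, L (f y) = c) (v w : E) :
    L (fderiv 𝕜 (fderiv 𝕜 f) x v w) = 0 := by
  have hzero : fderiv 𝕜 (fun y => L.comp (fderiv 𝕜 f y)) x = 0 := by
    rw [EventuallyEq.fderiv_eq (comp_fderiv_eventually_eq_zero_of_eventually_const hf hconst),
      fderiv_const_apply]
  have hchain : fderiv 𝕜 (fun y => L.comp (fderiv 𝕜 f y)) x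
      = (compL 𝕜 E F G L).comp (fderiv 𝕜 (fderiv 𝕜 f) x) :=
    ((compL 𝕜 E F G L).hasFDerivAt.comp x hf2.hasFDerivAt).fderiv
  simpa using congr($(hchain.symm.trans hzero) v w)

end ContinuousLinearMap

theorem integral_sum_mul_eq_zero_of_sum_eq_zero {Ω ι : Type*} [MeasurableSpace Ω] [Fintype ι]
    {μ : Measure Ω} {u : Ω → ι → ℝ} (hu : Integrable u μ) {c : ℝ}
    (hmean : ∀ l, ∫ ω, u ω l ∂μ = c) {a : ι → ℝ} (ha : ∑ l, a l = 0) :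
    ∫ ω, ∑ l, a l * u ω l ∂μ = 0 := by
  calc ∫ ω, ∑ l, a l * u ω l ∂μ
      = ∑ l, a l * ∫ ω, u ω l ∂μ := by
        rw [integral_finsetSum _ fun l _ => (hu.eval l).const_mul (a l)]
        simp only [integral_const_mul]
    _ = (∑ l, a l) * c := by simp only [hmean, Finset.sum_mul]
    _ = 0 := by rw [ha, zero_mul]

theorem expectation_second_derivative_inner_eq_zero_general
    (m k : ℕ) (Ω : Type*) [MeasurableSpace Ω] (μ : Measure Ω)
    (u : Ω → (Fin k → ℝ)) (hu : Integrable u μ)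
    (c : ℝ) (hmean : ∀ l, ∫ ω, u ω l ∂μ = c)
    (f : (Fin m → ℝ) → (Fin k → ℝ)) (β : Fin m → ℝ)
    (hf : ∀ᶠ y in nhds β, DifferentiableAt ℝ f y)
    (hf2 : DifferentiableAt ℝ (fderiv ℝ f) β)
    (hsum : ∀ᶠ y in nhds β, ∑ j, f y j = 1) :
    ∀ h j : Fin m,
      ∫ ω, ∑ l, fderiv ℝ (fderiv ℝ f) β (Pi.single h 1) (Pi.single j 1) l
        * u ω l ∂μ = 0 := by
  intro h j
  let sumCoords : (Fin k → ℝ) →L[ℝ] ℝ := ∑ l, ContinuousLinearMap.proj l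
  have hsumCoords (v : Fin k → ℝ) : sumCoords v = ∑ l, v l := by
    simp [sumCoords]
  refine integral_sum_mul_eq_zero_of_sum_eq_zero hu hmean ?_
  rw [← hsumCoords]
  exact ContinuousLinearMap.apply_fderiv_fderiv_eq_zero_of_eventually_const hf hf2
    (by simpa only [hsumCoords] using hsum) _ _

/-- Part (ii) of Lemma FInf: if `E[u] = c·1` and the coordinates of `f`
sum to one near `β`, then the expectation of the inner product of any
second partial derivative of `f` with `u` vanishes. -/
theorem expectation_second_derivative_inner_eq_zero
    (m k : ℕ) (Ω : Type*) [MeasurableSpace Ω] (μ : Measure Ω)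
    [IsProbabilityMeasure μ]
    (u : Ω → (Fin k → ℝ)) (hu : Integrable u μ)
    (c : ℝ) (hmean : ∀ l, ∫ ω, u ω l ∂μ = c)
    (f : (Fin m → ℝ) → (Fin k → ℝ)) (β : Fin m → ℝ)
    (hf : ∀ᶠ y in nhds β, DifferentiableAt ℝ f y)
    (hf2 : DifferentiableAt ℝ (fderiv ℝ f) β)
    (hsum : ∀ᶠ y in nhds β, ∑ j, f y j = 1) :
    ∀ h j : Fin m,
      ∫ ω, ∑ l, fderiv ℝ (fderiv ℝ f) β (Pi.single h 1) (Pi.single j 1) l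
        * u ω l ∂μ = 0 :=
  expectation_second_derivative_inner_eq_zero_general m k Ω μ u hu c hmean f β hf hf2 hsum
end
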